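/- Let ϱ : [0,∞) → [1,∞) be the inverse of the restriction of ψ to [1,∞), where ψ(t) = (1/2)(2t² + 1/t² − 5) + e^{1/t−1}. Then for all s ≥ 0, √(1+s) ≤ ϱ(s) ≤ 1 + √(2s). -/
import Mathlib


noncomputable def psi (t : ℝ) : ℝ :=
  (1/2) * (2*t^2 + 1/t^2 - 5) + Real.exp (1/t - 1)

theorem stmt_12 (ϱ : ℝ → ℝ)
    (hinv : ∀ s : ℝ, 0 ≤ s → 1 ≤ ϱ s ∧ psi (ϱ s) = s)
    (hinv' : ∀ t : ℝ, 1 ≤ t → ϱ (psi t) = t) :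
    ∀ s : ℝ, 0 ≤ s →
      Real.sqrt (1 + s) ≤ ϱ s ∧ ϱ s ≤ 1 + Real.sqrt (2 * s) := by
  intro s hs
  obtain ⟨ht, hpsi⟩ := hinv s hs
  set t := ϱ s with htdef
  have ht0 : (0:ℝ) < t := by linarith
  have hE1 : Real.exp (1/t - 1) ≤ 1 := by
    apply Real.exp_le_one_iff.mpr
    have : 1/t ≤ 1 := by
      rw [div_le_one ht0]; linarith
    linarith
  have hE2 : (1/t - 1) + 1 ≤ Real.exp (1/t - 1) := Real.add_one_le_exp _
  have hseq : s = t^2 + (1/2) * (1/t^2) - 5/2 + Real.exp (1/t - 1) := by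
    rw [← hpsi]; unfold psi; ring
  have ht2 : (0:ℝ) < t^2 := by positivity
  have hinv1 : 1/t^2 ≤ 1 := by
    rw [div_le_one ht2]; nlinarith
  constructor
  · -- lower bound
    have h1 : 1 + s ≤ t^2 := by nlinarith
    have := Real.sqrt_le_sqrt h1
    rwa [Real.sqrt_sq ht0.le] at this
  · -- upper bound
    have hta : t * (1/t) = 1 := by field_simp
    have hta2 : t^2 * (1/t^2) = 1 := by field_simp
    have key : (t - 1)^2 ≤ 2 * s := by
      nlinarith [sq_nonneg (t - 1), sq_nonneg (1/t - 1), sq_nonneg (t + 1/t - 2),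
        mul_pos ht0 ht0, sq_nonneg (t*(1/t) - 1)]
    have h2 : t - 1 ≤ Real.sqrt (2 * s) := by
      have := Real.sqrt_le_sqrt key
      rwa [Real.sqrt_sq (by linarith)] at this
    linarith
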